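/- arXiv:2203.02339 — 3 statements merged into one kernel-verified Lean document; each statement's English description precedes it below -/
import Mathlib

section
/- Let X ⊆ X₋ be quasi-Banach spaces with continuous embedding, θ ∈ (0,1], ϱ > 0, and suppose f ∈ X₋ satisfies K(t,f) ≤ ϱ t^θ for all t > 0. For each t > 0 choose f_t ∈ X with ‖f−f_t‖_{X₋} + t‖f_t‖_X ≤ 2K(t,f). Then ‖f − f_t‖_{(X₋,X)_{θ,∞}} ≤ 3ϱ for all t > 0, where ‖g‖_{(X₋,X)_{θ,∞}} = sup_{s>0} s^{−θ}K(s,g). -/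
open Set

/-- The K-functional `K(t,f) = inf_{h ∈ X} (‖f−h‖_{X₋} + t‖h‖_X)`. -/
noncomputable def Kfun {E : Type*} [AddCommGroup E]
    (Nm : E → ℝ) (X : Set E) (NX : E → ℝ) (t : ℝ) (f : E) : ℝ :=
  sInf ((fun h => Nm (f - h) + t * NX h) '' X)

/-- Key intermediate estimate: if `K(t,f) ≤ ϱ t^θ` for all `t > 0` and `f_t ∈ X` nearly
attains the infimum, `‖f−f_t‖_{X₋} + t‖f_t‖_X ≤ 2K(t,f)`, then
`‖f − f_t‖_{(X₋,X)_{θ,∞}} = sup_{s>0} s^{−θ} K(s, f−f_t) ≤ 3ϱ`.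
(Here the norm on `X` is assumed to satisfy the ordinary triangle inequality.) -/
theorem approximation_interpolation_bound {E : Type*} [AddCommGroup E]
    (Nm : E → ℝ) (X : Set E) (NX : E → ℝ)
    (hNm : ∀ g, 0 ≤ Nm g) (hNX : ∀ g, 0 ≤ NX g)
    (hXsub : ∀ x ∈ X, ∀ y ∈ X, x - y ∈ X)
    (hNXtri : ∀ x y : E, NX (x + y) ≤ NX x + NX y)
    (hNXneg : ∀ x : E, NX (-x) = NX x)
    (θ ϱ : ℝ) (hθ0 : 0 < θ) (hθ1 : θ ≤ 1) (hϱ : 0 < ϱ)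
    (f : E) (hK : ∀ t > 0, Kfun Nm X NX t f ≤ ϱ * t ^ θ)
    (t : ℝ) (ht : 0 < t) (ft : E) (hft : ft ∈ X)
    (hnear : Nm (f - ft) + t * NX ft ≤ 2 * Kfun Nm X NX t f) :
    ∀ s > 0, Kfun Nm X NX s (f - ft) ≤ 3 * ϱ * s ^ θ := by
  intro s hs
  have h0X : (0 : E) ∈ X := by simpa using hXsub ft hft ft hft
  have hsθ : (0 : ℝ) < s ^ θ := Real.rpow_pos_of_pos hs θ
  have htθ : (0 : ℝ) < t ^ θ := Real.rpow_pos_of_pos ht θ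
  -- upper bound of Kfun by any member of X
  have hKle : ∀ (u : ℝ), 0 ≤ u → ∀ (f' g : E), g ∈ X →
      Kfun Nm X NX u f' ≤ Nm (f' - g) + u * NX g := by
    intro u hu f' g hg
    refine csInf_le ⟨0, ?_⟩ (mem_image_of_mem _ hg)
    rintro x ⟨h, hh, rfl⟩
    have h1 := hNm (f' - h)
    have h2 := mul_nonneg hu (hNX h)
    dsimp only
    linarith
  -- near-infimum selection
  have hnearinf : ∀ u > 0, ∀ ε > 0, ∃ g ∈ X, Nm (f - g) + u * NX g < ϱ * u ^ θ + ε := by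
    intro u hu ε hε
    have hne : ((fun h => Nm (f - h) + u * NX h) '' X).Nonempty :=
      ⟨_, mem_image_of_mem _ hft⟩
    have hlt : Kfun Nm X NX u f < ϱ * u ^ θ + ε := lt_of_le_of_lt (hK u hu) (by linarith)
    obtain ⟨x, ⟨g, hg, rfl⟩, hx⟩ := exists_lt_of_csInf_lt hne hlt
    exact ⟨g, hg, hx⟩
  have hKt := hK t ht
  have hNm_ft : Nm (f - ft) ≤ 2 * (ϱ * t ^ θ) := by
    have h1 := mul_nonneg ht.le (hNX ft); linarith
  have hNXft : t * NX ft ≤ 2 * (ϱ * t ^ θ) := by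
    have h1 := hNm (f - ft); linarith
  by_cases hA : s ≤ t ∨ θ = 1
  · -- key power inequality : s * t ^ θ ≤ s ^ θ * t
    have hkey : s * t ^ θ ≤ s ^ θ * t := by
      rcases hA with hst | hθ
      · have e1 : s ^ θ * s ^ (1 - θ) = s := by
          rw [← Real.rpow_add hs]; norm_num
        have e2 : t ^ θ * t ^ (1 - θ) = t := by
          rw [← Real.rpow_add ht]; norm_num
        have h3 : s ^ (1 - θ) ≤ t ^ (1 - θ) :=
          Real.rpow_le_rpow hs.le hst (by linarith)
        have h4 := mul_le_mul_of_nonneg_left h3 (le_of_lt (mul_pos hsθ htθ))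
        nlinarith [h4]
      · simp [hθ, Real.rpow_one, mul_comm]
    have hsNXft : s * NX ft ≤ 2 * (ϱ * s ^ θ) := by
      have h1 : s * (t * NX ft) ≤ s * (2 * (ϱ * t ^ θ)) := by
        exact mul_le_mul_of_nonneg_left hNXft hs.le
      have h2 : 2 * ϱ * (s * t ^ θ) ≤ 2 * ϱ * (s ^ θ * t) := by
        exact mul_le_mul_of_nonneg_left hkey (by linarith)
      have h3 : t * (s * NX ft) ≤ t * (2 * (ϱ * s ^ θ)) := by nlinarith
      exact le_of_mul_le_mul_left h3 ht
    refine le_of_forall_pos_le_add ?_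
    intro ε hε
    obtain ⟨g, hg, hglt⟩ := hnearinf s hs ε hε
    have hgft : g - ft ∈ X := hXsub g hg ft hft
    have h1 : Kfun Nm X NX s (f - ft) ≤ Nm (f - ft - (g - ft)) + s * NX (g - ft) :=
      hKle s hs.le _ _ hgft
    have e : f - ft - (g - ft) = f - g := by abel
    rw [e] at h1
    have h2 : NX (g - ft) ≤ NX g + NX ft := by
      have h3 := hNXtri g (-ft)
      rw [hNXneg] at h3
      simpa [sub_eq_add_neg] using h3
    have h4 : s * NX (g - ft) ≤ s * NX g + s * NX ft := by nlinarith
    nlinarith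
  · push_neg at hA
    obtain ⟨hts, hθ1'⟩ := hA
    have hθlt : θ < 1 := lt_of_le_of_ne hθ1 hθ1'
    -- NX 0 = 0
    have hNX0 : NX (0 : E) = 0 := by
      refine le_antisymm (le_of_forall_pos_le_add ?_) (hNX 0)
      intro c hc
      set u : ℝ := (c / (4 * ϱ)) ^ (θ - 1)⁻¹ with hu_def
      have hcϱ : 0 < c / (4 * ϱ) := by positivity
      have hu : 0 < u := Real.rpow_pos_of_pos hcϱ _
      have huθ : u ^ (θ - 1) = c / (4 * ϱ) :=
        Real.rpow_inv_rpow hcϱ.le (by linarith)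
      have huθpos : (0 : ℝ) < u ^ θ := Real.rpow_pos_of_pos hu θ
      obtain ⟨g, hg, hglt⟩ := hnearinf u hu (ϱ * u ^ θ) (by positivity)
      have hNXg : u * NX g < 2 * (ϱ * u ^ θ) := by
        have h1 := hNm (f - g); linarith
      have h2 : NX (0 : E) ≤ 2 * NX g := by
        have h3 := hNXtri g (-g)
        rw [hNXneg] at h3
        simp only [add_neg_cancel] at h3
        linarith
      -- u ^ θ = u ^ (θ - 1) * u
      have h5 : u ^ θ = u ^ (θ - 1) * u := by
        rw [← Real.rpow_add_one hu.ne' (θ - 1)]; norm_num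
      have h6 : u * NX (0 : E) ≤ u * (0 + c) := by
        rw [huθ] at h5
        have : u * (2 * NX g) < u * (4 * ϱ * (u ^ θ / u)) := by
          rw [mul_comm u (4 * ϱ * (u ^ θ / u))]
          field_simp
          nlinarith
        have h7 : u ^ θ / u = c / (4 * ϱ) := by
          rw [h5]; field_simp
        rw [h7] at this
        have h8 : 4 * ϱ * (c / (4 * ϱ)) = c := by field_simp
        nlinarith [mul_le_mul_of_nonneg_left h2 hu.le]
      exact le_of_mul_le_mul_left h6 hu
    have h1 : Kfun Nm X NX s (f - ft) ≤ Nm (f - ft - 0) + s * NX 0 :=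
      hKle s hs.le _ _ h0X
    rw [hNX0, sub_zero] at h1
    have h9 : t ^ θ ≤ s ^ θ := Real.rpow_le_rpow ht.le hts.le hθ0.le
    nlinarith
end

section
/- Let 0 < p < 2, u > 0, and consider the embedding of ℓ^p into ℓ^2. For x^obs ∈ ℓ^2 with ‖x − x^obs‖₂ ≤ δ and x̂_α a minimizer over z ∈ ℓ^p of (1/(2α))‖x^obs − z‖₂² + (1/u)‖z‖_p^u, suppose the true x lies in the weak-ℓ^v space wℓ^v for some v ∈ (p,2), with ‖x‖_{wℓ^v} ≤ ϱ. Then under the a-priori parameter choice α ∼ ϱ^{−u/θ} δ^{((1−θ)u+2θ)/θ} with θ = p(2−v)/(v(2−p)), one has ‖x − x̂_α‖₂ = O(δ) and ‖x̂_α‖_p = O(δ^{2(p−v)/(p(2−v))}) as δ → 0. -/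
open Set ENNReal

/-- The `ℓ^p` (quasi-)norm `(∑ₖ |xₖ|^p)^{1/p}` with values in `ℝ≥0∞`. -/
noncomputable def lpNorm (p : ℝ) (x : ℕ → ℝ) : ℝ≥0∞ :=
  (∑' k, ENNReal.ofReal (|x k| ^ p)) ^ (1 / p)

/-- The weak-`ℓ^v` quasi-norm, `‖x‖_{wℓ^v} = (sup_{α>0} α^v #{k : |x_k| > α})^{1/v}`. -/
noncomputable def weakLpNorm (v : ℝ) (x : ℕ → ℝ) : ℝ≥0∞ :=
  (⨆ α ∈ Ioi (0 : ℝ),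
    ENNReal.ofReal α ^ v * ∑' k, (if α < |x k| then 1 else 0 : ℝ≥0∞)) ^ (1 / v)

/-! Truncating `x` at the level `β` where `ϱ^v β^{2-v} = δ²` splits it into a tail with
`‖·‖₂ ≲ δ` and a head with `‖·‖_p ≲ ψ := ϱ^{1/θ} δ^{1-1/θ}`: sort the entries into dyadic shells
and count each shell with the weak-`ℓ^v` bound. Comparing the Tikhonov functional at `x̂_α` with
its value at the head gives `‖x − x̂_α‖₂² ≲ δ² + α ψ^u` and `‖x̂_α‖_p^u ≲ δ²/α + ψ^u`, and the
a priori choice of `α` is exactly `α ψ^u ≍ δ²`. -/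

lemma card_lt_abs_le_of_weakLpNorm_le {v ϱ β : ℝ} {x : ℕ → ℝ} (hv : 0 < v) (hϱ : 0 ≤ ϱ)
    (hβ : 0 < β) (hw : weakLpNorm v x ≤ ENNReal.ofReal ϱ) :
    ∑' k, (if β < |x k| then 1 else 0 : ℝ≥0∞) ≤ ENNReal.ofReal (ϱ ^ v / β ^ v) := by
  have hβv : ENNReal.ofReal β ^ v * ∑' k, (if β < |x k| then 1 else 0 : ℝ≥0∞) ≤
      ⨆ α ∈ Ioi (0 : ℝ), ENNReal.ofReal α ^ v * ∑' k, (if α < |x k| then 1 else 0 : ℝ≥0∞) :=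
    le_biSup (fun α => ENNReal.ofReal α ^ v * ∑' k, (if α < |x k| then 1 else 0 : ℝ≥0∞))
      (mem_Ioi.2 hβ)
  have hsup := ENNReal.rpow_le_rpow hw hv.le
  rw [weakLpNorm, ← ENNReal.rpow_mul, one_div_mul_cancel hv.ne', ENNReal.rpow_one] at hsup
  rw [ENNReal.ofReal_div_of_pos (Real.rpow_pos_of_pos hβ v),
    ← ENNReal.ofReal_rpow_of_nonneg hϱ hv.le, ← ENNReal.ofReal_rpow_of_nonneg hβ.le hv.le,
    ENNReal.le_div_iff_mul_le (by simp [hβ, hv])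
      (Or.inl (ENNReal.rpow_ne_top_of_nonneg hv.le ENNReal.ofReal_ne_top)), mul_comm]
  exact hβv.trans hsup

lemma tsum_ofReal_mul_geometric {A r : ℝ} (hA : 0 ≤ A) (hr0 : 0 ≤ r) (hr1 : r < 1) :
    ∑' j : ℕ, ENNReal.ofReal (A * r ^ j) = ENNReal.ofReal (A / (1 - r)) := by
  rw [← ENNReal.ofReal_tsum_of_nonneg (fun j => by positivity)
      ((summable_geometric_of_lt_one hr0 hr1).mul_left A),
    tsum_mul_left, tsum_geometric_of_lt_one hr0 hr1, div_eq_mul_inv]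

lemma rpow_mul_div_rpow_eq_geometric {q v ϱ c b ρ : ℝ} (hc : 0 ≤ c) (hb : 0 < b) (hρ : 0 < ρ)
    (j : ℕ) :
    (c * (b * ρ ^ j)) ^ q * (ϱ ^ v / (b * ρ ^ j) ^ v) =
      c ^ q * ϱ ^ v * b ^ (q - v) * (ρ ^ (q - v)) ^ j := by
  have hℓ : 0 < b * ρ ^ j := by positivity
  rw [Real.mul_rpow hc hℓ.le, Real.rpow_pow_comm hρ.le, mul_assoc (c ^ q * ϱ ^ v),
    ← Real.mul_rpow hb.le (pow_nonneg hρ.le j), Real.rpow_sub hℓ]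
  ring

lemma tsum_rpow_le_of_shells {q v ϱ c b ρ : ℝ} {x y : ℕ → ℝ} (hq : 0 < q) (hv : 0 < v)
    (hϱ : 0 ≤ ϱ) (hc : 0 ≤ c) (hb : 0 < b) (hρ : 0 < ρ) (hρqv : ρ ^ (q - v) < 1)
    (hw : weakLpNorm v x ≤ ENNReal.ofReal ϱ)
    (hy : ∀ k, y k ≠ 0 → ∃ j : ℕ, b * ρ ^ j < |x k| ∧ |y k| ≤ c * (b * ρ ^ j)) :
    ∑' k, ENNReal.ofReal (|y k| ^ q) ≤
      ENNReal.ofReal (c ^ q * ϱ ^ v * b ^ (q - v) / (1 - ρ ^ (q - v))) := by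
  have hℓ : ∀ j : ℕ, 0 < b * ρ ^ j := fun j => by positivity
  calc ∑' k, ENNReal.ofReal (|y k| ^ q)
      ≤ ∑' k, ∑' j : ℕ, ENNReal.ofReal ((c * (b * ρ ^ j)) ^ q) *
          (if b * ρ ^ j < |x k| then 1 else 0) := by
        refine ENNReal.tsum_le_tsum fun k => ?_
        by_cases hk : y k = 0
        · simp [hk, Real.zero_rpow hq.ne']
        obtain ⟨j, hlow, hup⟩ := hy k hk
        refine le_trans ?_ (ENNReal.le_tsum j)
        rw [if_pos hlow, mul_one]
        exact ENNReal.ofReal_le_ofReal (Real.rpow_le_rpow (abs_nonneg _) hup hq.le)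
    _ = ∑' j : ℕ, ENNReal.ofReal ((c * (b * ρ ^ j)) ^ q) *
          ∑' k, (if b * ρ ^ j < |x k| then 1 else 0 : ℝ≥0∞) := by
        rw [ENNReal.tsum_comm]
        exact tsum_congr fun j => ENNReal.tsum_mul_left
    _ ≤ ∑' j : ℕ, ENNReal.ofReal ((c * (b * ρ ^ j)) ^ q) *
          ENNReal.ofReal (ϱ ^ v / (b * ρ ^ j) ^ v) :=
        ENNReal.tsum_le_tsum fun j =>
          mul_le_mul_right (card_lt_abs_le_of_weakLpNorm_le hv hϱ (hℓ j) hw) _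
    _ = ∑' j : ℕ, ENNReal.ofReal (c ^ q * ϱ ^ v * b ^ (q - v) * (ρ ^ (q - v)) ^ j) := by
        refine tsum_congr fun j => ?_
        rw [← ENNReal.ofReal_mul (by positivity), rpow_mul_div_rpow_eq_geometric hc hb hρ]
    _ = _ := tsum_ofReal_mul_geometric (by positivity) (by positivity) hρqv

noncomputable def truncate (β : ℝ) (x : ℕ → ℝ) : ℕ → ℝ := fun k => if β < |x k| then x k else 0

lemma lpNorm_le_of_tsum_le {q S : ℝ} {y : ℕ → ℝ} (hq : 0 < q) (hS : 0 ≤ S)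
    (h : ∑' k, ENNReal.ofReal (|y k| ^ q) ≤ ENNReal.ofReal S) :
    lpNorm q y ≤ ENNReal.ofReal (S ^ (1 / q)) := by
  rw [lpNorm, ← ENNReal.ofReal_rpow_of_nonneg hS (by positivity)]
  exact ENNReal.rpow_le_rpow h (by positivity)

lemma lpNorm_sub_truncate_le {v ϱ β : ℝ} {x : ℕ → ℝ} (hv0 : 0 < v) (hv2 : v < 2) (hϱ : 0 ≤ ϱ)
    (hβ : 0 < β) (hw : weakLpNorm v x ≤ ENNReal.ofReal ϱ) :
    lpNorm 2 (x - truncate β x) ≤ ENNReal.ofReal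
      ((4 / (1 - (1 / 2) ^ (2 - v))) ^ (1 / 2 : ℝ) * (ϱ ^ v * β ^ (2 - v)) ^ (1 / 2 : ℝ)) := by
  have hr : ((1 : ℝ) / 2) ^ (2 - v) < 1 :=
    Real.rpow_lt_one (by norm_num) (by norm_num) (by linarith)
  have hshell : ∀ k, (x - truncate β x) k ≠ 0 →
      ∃ j : ℕ, β * (1 / 2) ^ j < |x k| ∧ |(x - truncate β x) k| ≤ 2 * (β * (1 / 2) ^ j) := by
    intro k hk
    by_cases hxk : β < |x k|
    · simp [truncate, hxk] at hk
    have hyk : (x - truncate β x) k = x k := by simp [truncate, hxk]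
    rw [hyk] at hk ⊢
    obtain ⟨n, hlow, hup⟩ := exists_nat_pow_near_of_lt_one (div_pos (abs_pos.2 hk) hβ)
      ((div_le_one hβ).2 (not_lt.1 hxk)) (by norm_num : (0 : ℝ) < 1 / 2) (by norm_num)
    refine ⟨n + 1, by rwa [lt_div_iff₀ hβ, mul_comm] at hlow, ?_⟩
    rw [div_le_iff₀ hβ] at hup
    linarith [show 2 * (β * (1 / 2) ^ (n + 1)) = (1 / 2) ^ n * β by ring]
  have hsum := tsum_rpow_le_of_shells two_pos hv0 hϱ zero_le_two hβ one_half_pos hr hw hshell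
  rw [← Real.mul_rpow (by positivity) (by positivity)]
  refine lpNorm_le_of_tsum_le two_pos (by positivity) (hsum.trans_eq ?_)
  norm_num [div_mul_eq_mul_div, mul_assoc]

lemma lpNorm_truncate_le {p v ϱ β : ℝ} {x : ℕ → ℝ} (hp0 : 0 < p) (hpv : p < v) (hϱ : 0 ≤ ϱ)
    (hβ : 0 < β) (hw : weakLpNorm v x ≤ ENNReal.ofReal ϱ) :
    lpNorm p (truncate β x) ≤ ENNReal.ofReal
      ((4 ^ p / (2 ^ (p - v) * (1 - 2 ^ (p - v)))) ^ (1 / p) *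
        (ϱ ^ v * β ^ (p - v)) ^ (1 / p)) := by
  have hr : (2 : ℝ) ^ (p - v) < 1 := Real.rpow_lt_one_of_one_lt_of_neg (by norm_num) (by linarith)
  have hshell : ∀ k, truncate β x k ≠ 0 →
      ∃ j : ℕ, β / 2 * 2 ^ j < |x k| ∧ |truncate β x k| ≤ 4 * (β / 2 * 2 ^ j) := by
    intro k hk
    have hxk : β < |x k| := by by_contra h; simp [truncate, h] at hk
    obtain ⟨n, hlow, hup⟩ := exists_nat_pow_near ((one_le_div hβ).2 hxk.le) one_lt_two
    rw [le_div_iff₀ hβ] at hlow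
    rw [div_lt_iff₀ hβ] at hup
    refine ⟨n, by nlinarith [pow_pos (two_pos : (0 : ℝ) < 2) n], ?_⟩
    simp only [truncate, if_pos hxk]
    linarith [show 4 * (β / 2 * 2 ^ n) = 2 ^ (n + 1) * β by ring]
  have hsum := tsum_rpow_le_of_shells hp0 (hp0.trans hpv) hϱ (by norm_num) (half_pos hβ) two_pos
    hr hw hshell
  rw [← Real.mul_rpow (by positivity) (by positivity)]
  refine lpNorm_le_of_tsum_le hp0 (by positivity) (hsum.trans_eq ?_)
  rw [Real.div_rpow hβ.le zero_le_two]
  congr 1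
  field_simp

/-- `β = ϱ^{-v/(2-v)} δ^{2/(2-v)}` is the truncation level at which the `ℓ²` bound
`ϱ^v β^{2-v}` for the tail equals `δ²`. -/
lemma rpow_truncationLevel {v q ϱ δ : ℝ} (hϱ : 0 < ϱ) (hδ : 0 < δ) (hv : v ≠ 2) (hq : q ≠ 0) :
    (ϱ ^ v * (ϱ ^ (-(v / (2 - v))) * δ ^ (2 / (2 - v))) ^ (q - v)) ^ (1 / q) =
      ϱ ^ (v * (2 - q) / (q * (2 - v))) * δ ^ (2 * (q - v) / (q * (2 - v))) := by
  have h2v : 2 - v ≠ 0 := sub_ne_zero.2 (Ne.symm hv)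
  rw [Real.mul_rpow (x := ϱ ^ (-(v / (2 - v)))) (by positivity) (by positivity),
    ← Real.rpow_mul hϱ.le, ← Real.rpow_mul hδ.le, ← mul_assoc, ← Real.rpow_add hϱ,
    Real.mul_rpow (by positivity) (by positivity), ← Real.rpow_mul hϱ.le, ← Real.rpow_mul hδ.le]
  congr 2 <;> field_simp
  ring

lemma exists_truncation_approx {p v : ℝ} (hp0 : 0 < p) (hpv : p < v) (hv2 : v < 2) :
    ∃ K > 0, ∀ (ϱ δ : ℝ) (x : ℕ → ℝ), 0 < ϱ → 0 < δ → weakLpNorm v x ≤ ENNReal.ofReal ϱ →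
      ∃ z, lpNorm 2 (x - z) ≤ ENNReal.ofReal (K * δ) ∧
        lpNorm p z ≤ ENNReal.ofReal
          (K * (ϱ ^ (v * (2 - p) / (p * (2 - v))) * δ ^ (2 * (p - v) / (p * (2 - v))))) := by
  have hv0 : 0 < v := hp0.trans hpv
  set K₂ : ℝ := (4 / (1 - (1 / 2) ^ (2 - v))) ^ (1 / 2 : ℝ)
  set Kₚ : ℝ := (4 ^ p / (2 ^ (p - v) * (1 - 2 ^ (p - v)))) ^ (1 / p)
  have hK₂ : 0 < K₂ := by
    have : ((1 : ℝ) / 2) ^ (2 - v) < 1 :=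
      Real.rpow_lt_one (by norm_num) (by norm_num) (by linarith)
    exact Real.rpow_pos_of_pos (div_pos four_pos (by linarith)) _
  have hKₚ : 0 < Kₚ := by
    have : (2 : ℝ) ^ (p - v) < 1 := Real.rpow_lt_one_of_one_lt_of_neg (by norm_num) (by linarith)
    exact Real.rpow_pos_of_pos
      (div_pos (by positivity) (mul_pos (by positivity) (by linarith))) _
  refine ⟨max K₂ Kₚ, lt_max_of_lt_left hK₂, fun ϱ δ x hϱ hδ hw => ?_⟩
  set β := ϱ ^ (-(v / (2 - v))) * δ ^ (2 / (2 - v))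
  have hβ : 0 < β := by positivity
  refine ⟨truncate β x, (lpNorm_sub_truncate_le hv0 hv2 hϱ.le hβ hw).trans ?_,
    (lpNorm_truncate_le hp0 hpv hϱ.le hβ hw).trans ?_⟩
  · rw [rpow_truncationLevel hϱ hδ hv2.ne two_ne_zero, show v * (2 - 2) / (2 * (2 - v)) = 0 by ring,
      div_self (by linarith), Real.rpow_zero, Real.rpow_one, one_mul]
    exact ENNReal.ofReal_le_ofReal (mul_le_mul_of_nonneg_right (le_max_left _ _) hδ.le)
  · rw [rpow_truncationLevel hϱ hδ hv2.ne hp0.ne']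
    exact ENNReal.ofReal_le_ofReal
      (mul_le_mul_of_nonneg_right (le_max_right _ _) (by positivity))

lemma lpNorm_eq_eLpNorm {p : ℝ} (hp : 0 < p) (x : ℕ → ℝ) :
    lpNorm p x = MeasureTheory.eLpNorm x (ENNReal.ofReal p) MeasureTheory.Measure.count := by
  rw [MeasureTheory.eLpNorm_eq_eLpNorm' (by simpa using hp) ENNReal.ofReal_ne_top,
    ENNReal.toReal_ofReal hp.le, MeasureTheory.eLpNorm', MeasureTheory.lintegral_count, lpNorm]
  congr 1
  exact tsum_congr fun k => by
    rw [Real.enorm_eq_ofReal_abs, ENNReal.ofReal_rpow_of_nonneg (abs_nonneg _) hp.le]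

lemma lpNorm_two_sub_comm (f g : ℕ → ℝ) : lpNorm 2 (f - g) = lpNorm 2 (g - f) := by
  simp only [lpNorm_eq_eLpNorm two_pos, MeasureTheory.eLpNorm_sub_comm]

lemma lpNorm_two_sub_le (f g h : ℕ → ℝ) :
    lpNorm 2 (f - h) ≤ lpNorm 2 (f - g) + lpNorm 2 (g - h) := by
  simp only [lpNorm_eq_eLpNorm two_pos, ← sub_add_sub_cancel f g h]
  exact MeasureTheory.eLpNorm_add_le .of_discrete .of_discrete (by norm_num)

lemma le_ofReal_rpow_of_mul_rpow_le {X : ℝ≥0∞} {a s R : ℝ} (ha : 0 < a) (hs : 0 < s) (hR : 0 ≤ R)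
    (h : ENNReal.ofReal (1 / a) * X ^ s ≤ ENNReal.ofReal R) :
    X ≤ ENNReal.ofReal ((a * R) ^ (1 / s)) := by
  have hXs : X ^ s ≤ ENNReal.ofReal (a * R) := calc
    X ^ s = ENNReal.ofReal a * (ENNReal.ofReal (1 / a) * X ^ s) := by
      rw [← mul_assoc, ← ENNReal.ofReal_mul ha.le, mul_one_div_cancel ha.ne', ENNReal.ofReal_one,
        one_mul]
    _ ≤ ENNReal.ofReal a * ENNReal.ofReal R := mul_le_mul_right h _
    _ = ENNReal.ofReal (a * R) := (ENNReal.ofReal_mul ha.le).symm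
  calc X = (X ^ s) ^ (1 / s) := by
        rw [← ENNReal.rpow_mul, mul_one_div_cancel hs.ne', ENNReal.rpow_one]
    _ ≤ ENNReal.ofReal (a * R) ^ (1 / s) := ENNReal.rpow_le_rpow hXs (by positivity)
    _ = ENNReal.ofReal ((a * R) ^ (1 / s)) :=
      ENNReal.ofReal_rpow_of_nonneg (by positivity) (by positivity)

noncomputable def tikhonov (p u α : ℝ) (xobs z : ℕ → ℝ) : ℝ≥0∞ :=
  ENNReal.ofReal (1 / (2 * α)) * lpNorm 2 (xobs - z) ^ (2 : ℝ) +
    ENNReal.ofReal (1 / u) * lpNorm p z ^ u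

lemma tikhonov_minimizer_le {p u α δ A B : ℝ} {x xobs xhat z : ℕ → ℝ} (hu : 0 < u) (hα : 0 < α)
    (hδ : 0 ≤ δ) (hA : 0 ≤ A) (hB : 0 ≤ B) (hnoise : lpNorm 2 (x - xobs) ≤ ENNReal.ofReal δ)
    (hxz : lpNorm 2 (x - z) ≤ ENNReal.ofReal A) (hz : lpNorm p z ≤ ENNReal.ofReal B)
    (hmin : tikhonov p u α xobs xhat ≤ tikhonov p u α xobs z) :
    lpNorm 2 (xobs - xhat) ≤ ENNReal.ofReal (((δ + A) ^ 2 + 2 * α * B ^ u / u) ^ (1 / 2 : ℝ)) ∧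
      lpNorm p xhat ≤ ENNReal.ofReal ((u * (δ + A) ^ 2 / (2 * α) + B ^ u) ^ (1 / u)) := by
  have hobs : lpNorm 2 (xobs - z) ≤ ENNReal.ofReal (δ + A) := by
    rw [ENNReal.ofReal_add hδ hA]
    exact (lpNorm_two_sub_le xobs x z).trans (add_le_add (by rwa [lpNorm_two_sub_comm]) hxz)
  have hT : tikhonov p u α xobs xhat ≤ ENNReal.ofReal ((δ + A) ^ 2 / (2 * α) + B ^ u / u) := by
    refine hmin.trans (le_of_le_of_eq (add_le_add (mul_le_mul_right
      (ENNReal.rpow_le_rpow hobs zero_le_two) _) (mul_le_mul_right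
      (ENNReal.rpow_le_rpow hz hu.le) _)) ?_)
    rw [ENNReal.ofReal_rpow_of_nonneg (by positivity) zero_le_two,
      ENNReal.ofReal_rpow_of_nonneg hB hu.le, ← ENNReal.ofReal_mul (by positivity),
      ← ENNReal.ofReal_mul (by positivity), ← ENNReal.ofReal_add (by positivity) (by positivity),
      Real.rpow_two]
    congr 1
    ring
  unfold tikhonov at hT
  constructor
  · convert le_ofReal_rpow_of_mul_rpow_le (mul_pos two_pos hα) two_pos (by positivity)
      (le_self_add.trans hT) using 3
    field_simp
  · convert le_ofReal_rpow_of_mul_rpow_le hu hu (by positivity) (le_add_self.trans hT) using 3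
    field_simp

lemma exists_tikhonov_rate {p u cl cr K : ℝ} (hu : 0 < u) (hcl : 0 < cl) (hK : 0 ≤ K) :
    ∃ C > 0, ∀ (δ ψ α : ℝ) (x xobs xhat z : ℕ → ℝ), 0 < δ → 0 < ψ → 0 < α →
      cl * δ ^ 2 ≤ α * ψ ^ u → α * ψ ^ u ≤ cr * δ ^ 2 →
      lpNorm 2 (x - xobs) ≤ ENNReal.ofReal δ → lpNorm 2 (x - z) ≤ ENNReal.ofReal (K * δ) →
      lpNorm p z ≤ ENNReal.ofReal (K * ψ) →
      tikhonov p u α xobs xhat ≤ tikhonov p u α xobs z →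
      lpNorm 2 (x - xhat) ≤ ENNReal.ofReal (C * δ) ∧ lpNorm p xhat ≤ ENNReal.ofReal (C * ψ) := by
  set M := (1 + K) ^ 2 + 2 * K ^ u / u * cr
  set N := u * (1 + K) ^ 2 / 2 / cl + K ^ u
  have hN : 0 < N := by positivity
  refine ⟨max (1 + M ^ (1 / 2 : ℝ)) (N ^ (1 / u)), lt_max_of_lt_right (by positivity),
    fun δ ψ α x xobs xhat z hδ hψ hα hl hr hnoise hxz hz hmin => ?_⟩
  obtain ⟨hobs, hxhat⟩ :=
    tikhonov_minimizer_le hu hα hδ.le (by positivity) (by positivity) hnoise hxz hz hmin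
  have hcr : 0 < cr :=
    pos_of_mul_pos_left ((by positivity : 0 < α * ψ ^ u).trans_le hr) (sq_nonneg δ)
  have hKψ : (K * ψ) ^ u = K ^ u * ψ ^ u := Real.mul_rpow hK hψ.le
  have hδψ : δ ^ 2 / α ≤ ψ ^ u / cl := by
    rw [div_le_div_iff₀ hα hcl]
    linarith
  have hM : (δ + K * δ) ^ 2 + 2 * α * (K * ψ) ^ u / u ≤ M * δ ^ 2 := calc
    _ = (1 + K) ^ 2 * δ ^ 2 + 2 * K ^ u / u * (α * ψ ^ u) := by rw [hKψ]; ring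
    _ ≤ (1 + K) ^ 2 * δ ^ 2 + 2 * K ^ u / u * (cr * δ ^ 2) := by gcongr
    _ = M * δ ^ 2 := by ring
  have hN' : u * (δ + K * δ) ^ 2 / (2 * α) + (K * ψ) ^ u ≤ N * ψ ^ u := calc
    _ = u * (1 + K) ^ 2 / 2 * (δ ^ 2 / α) + K ^ u * ψ ^ u := by rw [hKψ]; ring
    _ ≤ u * (1 + K) ^ 2 / 2 * (ψ ^ u / cl) + K ^ u * ψ ^ u := by gcongr
    _ = N * ψ ^ u := by ring
  constructor
  · calc lpNorm 2 (x - xhat) ≤ lpNorm 2 (x - xobs) + lpNorm 2 (xobs - xhat) :=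
          lpNorm_two_sub_le _ _ _
      _ ≤ ENNReal.ofReal δ + ENNReal.ofReal ((M * δ ^ 2) ^ (1 / 2 : ℝ)) :=
          add_le_add hnoise (hobs.trans (ENNReal.ofReal_le_ofReal
            (Real.rpow_le_rpow (by positivity) hM (by norm_num))))
      _ = ENNReal.ofReal ((1 + M ^ (1 / 2 : ℝ)) * δ) := by
          rw [Real.mul_rpow (by positivity) (sq_nonneg δ), ← Real.rpow_natCast,
            ← Real.rpow_mul hδ.le, ← ENNReal.ofReal_add hδ.le (by positivity)]
          norm_num [one_add_mul]
      _ ≤ ENNReal.ofReal (_ * δ) :=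
          ENNReal.ofReal_le_ofReal (mul_le_mul_of_nonneg_right (le_max_left _ _) hδ.le)
  · calc lpNorm p xhat ≤ ENNReal.ofReal ((N * ψ ^ u) ^ (1 / u)) :=
          hxhat.trans (ENNReal.ofReal_le_ofReal
            (Real.rpow_le_rpow (by positivity) hN' (by positivity)))
      _ = ENNReal.ofReal (N ^ (1 / u) * ψ) := by
          rw [Real.mul_rpow hN.le (by positivity), ← Real.rpow_mul hψ.le, mul_one_div_cancel hu.ne',
            Real.rpow_one]
      _ ≤ ENNReal.ofReal (_ * ψ) :=
          ENNReal.ofReal_le_ofReal (mul_le_mul_of_nonneg_right (le_max_right _ _) hψ.le)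

/-- The `ℓ^p`-rate here is `ψ = ϱ^{1/θ} δ^{1-1/θ}`. -/
lemma paramChoice_mul_rate_rpow_eq_sq {p v u ϱ δ θ : ℝ} (hϱ : 0 < ϱ) (hδ : 0 < δ) (hp : p ≠ 0)
    (hv : v ≠ 0) (hp2 : p ≠ 2) (hv2 : v ≠ 2) (hθ : θ = p * (2 - v) / (v * (2 - p))) :
    ϱ ^ (-(u / θ)) * δ ^ (((1 - θ) * u + 2 * θ) / θ) *
        (ϱ ^ (v * (2 - p) / (p * (2 - v))) * δ ^ (2 * (p - v) / (p * (2 - v)))) ^ u = δ ^ 2 := by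
  have h2p : 2 - p ≠ 0 := sub_ne_zero.2 (Ne.symm hp2)
  have h2v : 2 - v ≠ 0 := sub_ne_zero.2 (Ne.symm hv2)
  rw [Real.mul_rpow (by positivity) (by positivity), ← Real.rpow_mul hϱ.le, ← Real.rpow_mul hδ.le,
    mul_mul_mul_comm, ← Real.rpow_add hϱ, ← Real.rpow_add hδ, ← Real.rpow_natCast]
  subst hθ
  rw [show -(u / (p * (2 - v) / (v * (2 - p)))) + v * (2 - p) / (p * (2 - v)) * u = 0 by
    field_simp; ring, Real.rpow_zero, one_mul]
  congr 1
  push_cast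
  field_simp
  ring

theorem lp_embedding_rates_general (p u v ϱ cl cr : ℝ)
    (hp0 : 0 < p) (hp2 : p < 2) (hu : 0 < u) (hvp : p < v) (hv2 : v < 2)
    (hϱ : 0 < ϱ) (hcl : 0 < cl) :
    ∃ C > 0, ∀ (δ α : ℝ) (x xobs xhat : ℕ → ℝ), 0 < δ → 0 < α →
      -- smoothness of the true solution: `‖x‖_{wℓ^v} ≤ ϱ`
      weakLpNorm v x ≤ ENNReal.ofReal ϱ →
      -- deterministic noise level in `ℓ^2`
      lpNorm 2 (x - xobs) ≤ ENNReal.ofReal δ →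
      -- a priori parameter choice with `θ = p(2−v)/(v(2−p))`
      cl * ϱ ^ (-(u / (p * (2 - v) / (v * (2 - p))))) *
          δ ^ (((1 - p * (2 - v) / (v * (2 - p))) * u + 2 * (p * (2 - v) / (v * (2 - p)))) /
            (p * (2 - v) / (v * (2 - p)))) ≤ α →
      α ≤ cr * ϱ ^ (-(u / (p * (2 - v) / (v * (2 - p))))) *
          δ ^ (((1 - p * (2 - v) / (v * (2 - p))) * u + 2 * (p * (2 - v) / (v * (2 - p)))) /
            (p * (2 - v) / (v * (2 - p)))) →
      -- `x̂_α` minimizes the Tikhonov functional over `ℓ^p`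
      (lpNorm p xhat ≠ ⊤ ∧ ∀ z : ℕ → ℝ,
        ENNReal.ofReal (1 / (2 * α)) * lpNorm 2 (xobs - xhat) ^ (2 : ℝ) +
            ENNReal.ofReal (1 / u) * lpNorm p xhat ^ u ≤
          ENNReal.ofReal (1 / (2 * α)) * lpNorm 2 (xobs - z) ^ (2 : ℝ) +
            ENNReal.ofReal (1 / u) * lpNorm p z ^ u) →
      lpNorm 2 (x - xhat) ≤ ENNReal.ofReal (C * δ) ∧
      lpNorm p xhat ≤ ENNReal.ofReal (C * δ ^ (2 * (p - v) / (p * (2 - v)))) := by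
  obtain ⟨K, hK, happrox⟩ := exists_truncation_approx hp0 hvp hv2
  obtain ⟨C, hC, hrate⟩ := exists_tikhonov_rate (p := p) (cr := cr) hu hcl hK.le
  set G := ϱ ^ (v * (2 - p) / (p * (2 - v)))
  refine ⟨C * max 1 G, by positivity, fun δ α x xobs xhat hδ hα hw hnoise hl hr hmin => ?_⟩
  obtain ⟨z, hxz, hz⟩ := happrox ϱ δ x hϱ hδ hw
  have hbal := paramChoice_mul_rate_rpow_eq_sq (u := u) hϱ hδ hp0.ne' (hp0.trans hvp).ne' hp2.ne
    hv2.ne rfl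
  obtain ⟨hx, hxhat⟩ := hrate δ _ α x xobs xhat z hδ (by positivity) hα
    (by rw [← hbal, ← mul_assoc, ← mul_assoc]; gcongr)
    (by rw [← hbal, ← mul_assoc, ← mul_assoc]; gcongr) hnoise hxz hz (hmin.2 z)
  refine ⟨hx.trans (ENNReal.ofReal_le_ofReal ?_), hxhat.trans (ENNReal.ofReal_le_ofReal ?_)⟩
  · exact mul_le_mul_of_nonneg_right (le_mul_of_one_le_right hC.le (le_max_left _ _)) hδ.le
  · rw [← mul_assoc]
    gcongr
    exact le_max_right _ _

/-- Convergence rates for oversmoothing `ℓ^p`-penalized Tikhonov regularization of the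
embedding `ℓ^p ↪ ℓ^2` (`0 < p < 2`): if `‖x‖_{wℓ^v} ≤ ϱ` for some `v ∈ (p,2)` and the
regularization parameter is chosen a priori, `α ∼ ϱ^{−u/θ} δ^{((1−θ)u+2θ)/θ}` with
`θ = p(2−v)/(v(2−p))`, then `‖x − x̂_α‖₂ = O(δ)` and
`‖x̂_α‖_p = O(δ^{2(p−v)/(p(2−v))})` as `δ → 0`. -/
theorem lp_embedding_rates (p u v ϱ cl cr : ℝ)
    (hp0 : 0 < p) (hp2 : p < 2) (hu : 0 < u) (hvp : p < v) (hv2 : v < 2)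
    (hϱ : 0 < ϱ) (hcl : 0 < cl) (hclr : cl ≤ cr) :
    ∃ C > 0, ∀ (δ α : ℝ) (x xobs xhat : ℕ → ℝ), 0 < δ → 0 < α →
      -- smoothness of the true solution: `‖x‖_{wℓ^v} ≤ ϱ`
      weakLpNorm v x ≤ ENNReal.ofReal ϱ →
      -- deterministic noise level in `ℓ^2`
      lpNorm 2 (x - xobs) ≤ ENNReal.ofReal δ →
      -- a priori parameter choice with `θ = p(2−v)/(v(2−p))`
      cl * ϱ ^ (-(u / (p * (2 - v) / (v * (2 - p))))) *
          δ ^ (((1 - p * (2 - v) / (v * (2 - p))) * u + 2 * (p * (2 - v) / (v * (2 - p)))) /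
            (p * (2 - v) / (v * (2 - p)))) ≤ α →
      α ≤ cr * ϱ ^ (-(u / (p * (2 - v) / (v * (2 - p))))) *
          δ ^ (((1 - p * (2 - v) / (v * (2 - p))) * u + 2 * (p * (2 - v) / (v * (2 - p)))) /
            (p * (2 - v) / (v * (2 - p)))) →
      -- `x̂_α` minimizes the Tikhonov functional over `ℓ^p`
      (lpNorm p xhat ≠ ⊤ ∧ ∀ z : ℕ → ℝ,
        ENNReal.ofReal (1 / (2 * α)) * lpNorm 2 (xobs - xhat) ^ (2 : ℝ) +
            ENNReal.ofReal (1 / u) * lpNorm p xhat ^ u ≤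
          ENNReal.ofReal (1 / (2 * α)) * lpNorm 2 (xobs - z) ^ (2 : ℝ) +
            ENNReal.ofReal (1 / u) * lpNorm p z ^ u) →
      lpNorm 2 (x - xhat) ≤ ENNReal.ofReal (C * δ) ∧
      lpNorm p xhat ≤ ENNReal.ofReal (C * δ ^ (2 * (p - v) / (p * (2 - v)))) :=
  lp_embedding_rates_general p u v ϱ cl cr hp0 hp2 hu hvp hv2 hϱ hcl
end

section
/- Let F satisfy the two-sided Lipschitz condition of Assumption 2.1 with constants M₁, M₂, let f ∈ (X₋,X_R)_{θ,∞} with norm bound ϱ, θ ∈ (0,1], u > 0, and let g^obs ∈ Y with ‖g^obs − F(f)‖_Y ≤ δ. Let f̂_α minimize h ↦ (1/(2α))‖g^obs−F(h)‖_Y² + (1/u)‖h‖_{X_R}^u. If the discrepancy principle c_D δ ≤ ‖g^obs − F(f̂_α)‖_Y ≤ C_D δ holds with constants 1 < c_D ≤ C_D, and the K-functional approximation f_t (for a suitable t ∼ (δ/ϱ)^{1/θ}) lies in the domain, then ‖f̂_α‖_{X_R} ≤ ‖f_t‖_{X_R} ≤ C ϱ^{1/θ} δ^{(θ−1)/θ}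 for some constant C depending only on M₂, c_D, θ. -/
open Set

/-!
The choice `t^θ = (c_D − 1) δ / (2 M₂ ϱ)` makes the Lipschitz bound give
`‖g^obs − F(f_t)‖ ≤ δ + M₂ · 2ϱ t^θ = c_D δ ≤ ‖g^obs − F(f̂_α)‖`. So `f_t` has a smaller
data misfit than the minimizer `f̂_α`, and minimality of `f̂_α` forces its penalty to be
smaller: `‖f̂_α‖_{X_R} ≤ ‖f_t‖_{X_R} ≤ 2ϱ t^{θ−1}`, which is `C ϱ^{1/θ} δ^{(θ−1)/θ}`.
-/

namespace Real

lemma mul_rpow_one_div_rpow {κ x θ : ℝ} (hκ : 0 ≤ κ) (hx : 0 ≤ x) (hθ : θ ≠ 0) :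
    (κ * x ^ (1 / θ)) ^ θ = κ ^ θ * x := by
  rw [mul_rpow hκ (rpow_nonneg hx _), ← rpow_mul hx, one_div_mul_cancel hθ, rpow_one]

lemma mul_mul_div_rpow_one_div_rpow_sub_one {κ ϱ δ θ : ℝ} (hκ : 0 ≤ κ) (hϱ : 0 < ϱ)
    (hδ : 0 ≤ δ) (hθ : θ ≠ 0) :
    ϱ * (κ * (δ / ϱ) ^ (1 / θ)) ^ (θ - 1) =
      κ ^ (θ - 1) * ϱ ^ (1 / θ) * δ ^ ((θ - 1) / θ) := by
  have hδϱ : 0 ≤ δ / ϱ := div_nonneg hδ hϱ.le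
  have h_exp : (1 : ℝ) / θ = 1 - (θ - 1) / θ := by field_simp; ring
  rw [mul_rpow hκ (rpow_nonneg hδϱ _), ← rpow_mul hδϱ,
    show 1 / θ * (θ - 1) = (θ - 1) / θ by ring, div_rpow hδ hϱ.le, h_exp,
    rpow_sub hϱ, rpow_one]
  field_simp

end Real

lemma penalty_le_of_tikhonov_le_of_misfit_le {α u a b ra rb : ℝ} (hα : 0 < α) (hu : 0 < u)
    (hb : 0 ≤ b) (hrb : 0 ≤ rb) (hr : rb ≤ ra)
    (hmin : 1 / (2 * α) * ra ^ 2 + 1 / u * a ^ u ≤ 1 / (2 * α) * rb ^ 2 + 1 / u * b ^ u) :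
    a ≤ b := by
  have hsq : 1 / (2 * α) * rb ^ 2 ≤ 1 / (2 * α) * ra ^ 2 := by gcongr
  have hpow : a ^ u ≤ b ^ u :=
    le_of_mul_le_mul_left (by linarith : 1 / u * a ^ u ≤ 1 / u * b ^ u) (by positivity)
  by_contra! hba
  exact (Real.rpow_lt_rpow hb hba hu).not_ge hpow

theorem discrepancy_penalty_bound_general {E Y : Type*} [AddCommGroup E] [NormedAddCommGroup Y]
    (Nm NR : E → ℝ) (XR DF : Set E) (F : E → Y)
    (M₁ M₂ u θ cD CD : ℝ) (hM₂ : 0 < M₂) (hu : 0 < u)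
    (hθ0 : 0 < θ) (hcD : 1 < cD)
    (hNR : ∀ g, 0 ≤ NR g) :
    ∃ κ > 0, ∃ C > 0, ∀ (f : E) (ϱ δ α : ℝ) (gobs : Y) (fhat ft : E),
      0 < ϱ → 0 < δ → 0 < α →
      -- two-sided Lipschitz condition of Assumption 2.1 on `D_F ∪ {f}`
      (∀ f₁ ∈ insert f DF, ∀ f₂ ∈ insert f DF,
        M₁⁻¹ * Nm (f₁ - f₂) ≤ ‖F f₁ - F f₂‖ ∧ ‖F f₁ - F f₂‖ ≤ M₂ * Nm (f₁ - f₂)) →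
      -- `f ∈ (X₋,X_R)_{θ,∞}` with norm at most `ϱ`
      (∀ t > 0, Kfun Nm XR NR t f ≤ ϱ * t ^ θ) →
      -- noise level
      ‖gobs - F f‖ ≤ δ →
      -- the K-functional approximation `f_t` for `t = κ (δ/ϱ)^{1/θ}` lies in the domain
      (ft ∈ DF ∧
        Nm (f - ft) ≤ 2 * ϱ * (κ * (δ / ϱ) ^ ((1 : ℝ) / θ)) ^ θ ∧
        NR ft ≤ 2 * ϱ * (κ * (δ / ϱ) ^ ((1 : ℝ) / θ)) ^ (θ - 1)) →
      -- `f̂_α` minimizes the Tikhonov functional over `D_F`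
      (fhat ∈ DF ∧ ∀ h ∈ DF,
        1 / (2 * α) * ‖gobs - F fhat‖ ^ 2 + 1 / u * NR fhat ^ u ≤
          1 / (2 * α) * ‖gobs - F h‖ ^ 2 + 1 / u * NR h ^ u) →
      -- discrepancy principle
      cD * δ ≤ ‖gobs - F fhat‖ → ‖gobs - F fhat‖ ≤ CD * δ →
      NR fhat ≤ NR ft ∧ NR ft ≤ C * ϱ ^ ((1 : ℝ) / θ) * δ ^ ((θ - 1) / θ) := by
  have hbase : 0 < (cD - 1) / (2 * M₂) := by apply div_pos <;> linarith
  set κ : ℝ := ((cD - 1) / (2 * M₂)) ^ ((1 : ℝ) / θ) with hκ_def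
  have hκ : 0 < κ := Real.rpow_pos_of_pos hbase _
  have hκθ : κ ^ θ = (cD - 1) / (2 * M₂) := by
    rw [hκ_def, ← Real.rpow_mul hbase.le, one_div_mul_cancel hθ0.ne', Real.rpow_one]
  refine ⟨κ, hκ, 2 * κ ^ (θ - 1), by positivity, ?_⟩
  intro f ϱ δ α gobs fhat ft hϱ hδ hα hLip _ hnoise ⟨hftD, hftNm, hftNR⟩ ⟨_, hmin⟩ hd1 _
  have hLip_ft : M₂ * Nm (f - ft) ≤ (cD - 1) * δ := calc
    M₂ * Nm (f - ft) ≤ M₂ * (2 * ϱ * (κ ^ θ * (δ / ϱ))) := by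
      rw [← Real.mul_rpow_one_div_rpow hκ.le (div_nonneg hδ.le hϱ.le) hθ0.ne']
      exact mul_le_mul_of_nonneg_left hftNm hM₂.le
    _ = (cD - 1) * δ := by rw [hκθ]; field_simp
  have hmisfit : ‖gobs - F ft‖ ≤ ‖gobs - F fhat‖ := calc
    ‖gobs - F ft‖ ≤ ‖gobs - F f‖ + ‖F f - F ft‖ := norm_sub_le_norm_sub_add_norm_sub _ _ _
    _ ≤ δ + M₂ * Nm (f - ft) :=
      add_le_add hnoise (hLip f (mem_insert _ _) ft (mem_insert_of_mem _ hftD)).2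
    _ ≤ cD * δ := by linarith
    _ ≤ ‖gobs - F fhat‖ := hd1
  refine ⟨penalty_le_of_tikhonov_le_of_misfit_le hα hu (hNR ft) (norm_nonneg _) hmisfit
    (hmin ft hftD), ?_⟩
  calc NR ft ≤ 2 * (ϱ * (κ * (δ / ϱ) ^ ((1 : ℝ) / θ)) ^ (θ - 1)) := by linarith
    _ = 2 * κ ^ (θ - 1) * ϱ ^ ((1 : ℝ) / θ) * δ ^ ((θ - 1) / θ) := by
      rw [Real.mul_mul_div_rpow_one_div_rpow_sub_one hκ.le hϱ hδ.le hθ0.ne']; ring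

/-- Penalty bound under the discrepancy principle (key comparison argument of
Theorem 2.4(c)): if `f̂_α` minimizes the Tikhonov functional for data `g^obs` with
`‖g^obs − F(f)‖ ≤ δ`, the discrepancy principle `c_D δ ≤ ‖g^obs − F(f̂_α)‖ ≤ C_D δ`
holds, and the K-functional approximation `f_t` (for a suitable `t = κ (δ/ϱ)^{1/θ}`)
lies in the domain, then `‖f̂_α‖_{X_R} ≤ ‖f_t‖_{X_R} ≤ C ϱ^{1/θ} δ^{(θ−1)/θ}` with
`C, κ` depending only on `M₂, c_D, θ`. -/
theorem discrepancy_penalty_bound {E Y : Type*} [AddCommGroup E] [NormedAddCommGroup Y]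
    (Nm NR : E → ℝ) (XR DF : Set E) (F : E → Y)
    (M₁ M₂ u θ cD CD : ℝ) (hM₁ : 0 < M₁) (hM₂ : 0 < M₂) (hu : 0 < u)
    (hθ0 : 0 < θ) (hθ1 : θ ≤ 1) (hcD : 1 < cD) (hcDCD : cD ≤ CD)
    (hNm : ∀ g, 0 ≤ Nm g) (hNR : ∀ g, 0 ≤ NR g) :
    ∃ κ > 0, ∃ C > 0, ∀ (f : E) (ϱ δ α : ℝ) (gobs : Y) (fhat ft : E),
      0 < ϱ → 0 < δ → 0 < α →
      -- two-sided Lipschitz condition of Assumption 2.1 on `D_F ∪ {f}`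
      (∀ f₁ ∈ insert f DF, ∀ f₂ ∈ insert f DF,
        M₁⁻¹ * Nm (f₁ - f₂) ≤ ‖F f₁ - F f₂‖ ∧ ‖F f₁ - F f₂‖ ≤ M₂ * Nm (f₁ - f₂)) →
      -- `f ∈ (X₋,X_R)_{θ,∞}` with norm at most `ϱ`
      (∀ t > 0, Kfun Nm XR NR t f ≤ ϱ * t ^ θ) →
      -- noise level
      ‖gobs - F f‖ ≤ δ →
      -- the K-functional approximation `f_t` for `t = κ (δ/ϱ)^{1/θ}` lies in the domain
      (ft ∈ DF ∧
        Nm (f - ft) ≤ 2 * ϱ * (κ * (δ / ϱ) ^ ((1 : ℝ) / θ)) ^ θ ∧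
        NR ft ≤ 2 * ϱ * (κ * (δ / ϱ) ^ ((1 : ℝ) / θ)) ^ (θ - 1)) →
      -- `f̂_α` minimizes the Tikhonov functional over `D_F`
      (fhat ∈ DF ∧ ∀ h ∈ DF,
        1 / (2 * α) * ‖gobs - F fhat‖ ^ 2 + 1 / u * NR fhat ^ u ≤
          1 / (2 * α) * ‖gobs - F h‖ ^ 2 + 1 / u * NR h ^ u) →
      -- discrepancy principle
      cD * δ ≤ ‖gobs - F fhat‖ → ‖gobs - F fhat‖ ≤ CD * δ →
      NR fhat ≤ NR ft ∧ NR ft ≤ C * ϱ ^ ((1 : ℝ) / θ) * δ ^ ((θ - 1) / θ) :=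
  discrepancy_penalty_bound_general Nm NR XR DF F M₁ M₂ u θ cD CD hM₂ hu hθ0 hcD hNR
end
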